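/- Let Ω₁ := B(0,1) ∖ {(x,0) : 0 ≤ x ≤ 1} ⊆ ℝ² (the open unit disc with a radial slit removed). Then Ω₁ satisfies the D₀-John condition for some D₀ ≥ 1 (one may take the John point X₀ = (0, −1/2)), but Ω₁ does not satisfy the local D₀-John condition for any D₀ ≥ 1. -/

import Mathlib

open Set Metric MeasureTheory
open scoped ENNReal NNReal

noncomputable section

/-- Euclidean space `ℝ^m`. -/
abbrev Euc (m : ℕ) : Type := EuclideanSpace ℝ (Fin m)

variable {m : ℕ}

/-- `E ⊆ ℝ^m` is `d`-Ahlfors–David regular: `E` is closed and there is `D ≥ 1` with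
`D⁻¹ rᵈ ≤ ℋᵈ(B(x,r) ∩ E) ≤ D rᵈ` for all `x ∈ E` and `0 < r < diam E`. -/
def IsADR (d : ℝ) (E : Set (Euc m)) : Prop :=
  IsClosed E ∧ ∃ D : ℝ, 1 ≤ D ∧ ∀ x ∈ E, ∀ r : ℝ, 0 < r →
    ENNReal.ofReal r < EMetric.diam E →
      ENNReal.ofReal (r ^ d / D) ≤ μH[d] (ball x r ∩ E) ∧
        μH[d] (ball x r ∩ E) ≤ ENNReal.ofReal (D * r ^ d)

/-- The corkscrew condition for `Ω` with constant `c ∈ (0,1)`: for every `x ∈ ∂Ω` and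
`0 < r < diam ∂Ω` there is `X ∈ Ω` with `B(X, c·r) ⊆ B(x,r) ∩ Ω`. -/
def CorkscrewWith (Ω : Set (Euc m)) (c : ℝ) : Prop :=
  ∀ x ∈ frontier Ω, ∀ r : ℝ, 0 < r → ENNReal.ofReal r < EMetric.diam (frontier Ω) →
    ∃ X ∈ Ω, ball X (c * r) ⊆ ball x r ∩ Ω

/-- The corkscrew condition (for some constant `c ∈ (0,1)`). -/
def Corkscrew (Ω : Set (Euc m)) : Prop := ∃ c : ℝ, 0 < c ∧ c < 1 ∧ CorkscrewWith Ω c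

/-- The 2-sided corkscrew condition: both `Ω` and `int (Ωᶜ)` satisfy the corkscrew condition. -/
def TwoSidedCorkscrew (Ω : Set (Euc m)) : Prop :=
  Corkscrew Ω ∧ Corkscrew (interior Ωᶜ)

/-- The distance between two sets. -/
def distSet (s t : Set (Euc m)) : ℝ := sInf {d : ℝ | ∃ x ∈ s, ∃ y ∈ t, d = dist x y}

/-- A path in `Ω`: a continuous map `γ : [0,1] → closure Ω` with `γ(t) ∈ Ω` for `t ∈ (0,1]`. -/
def IsPathIn (Ω : Set (Euc m)) (γ : ℝ → Euc m) : Prop :=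
  ContinuousOn γ (Icc 0 1) ∧ (∀ t ∈ Icc (0:ℝ) 1, γ t ∈ closure Ω) ∧
    ∀ t ∈ Ioc (0:ℝ) 1, γ t ∈ Ω

/-- The length (total variation) of a path `γ : [0,1] → ℝ^m`. -/
def pathLen (γ : ℝ → Euc m) : ℝ≥0∞ := eVariationOn γ (Icc 0 1)

/-- A `D`-non-tangential path in `Ω`: a path in `Ω` such that for every `t ∈ [0,1]` the length of
`γ` restricted to `[0,t]` is at most `D · dist(γ t, ∂Ω)`. -/
def IsNTPath (Ω : Set (Euc m)) (D : ℝ) (γ : ℝ → Euc m) : Prop :=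
  IsPathIn Ω γ ∧ ∀ t ∈ Icc (0:ℝ) 1,
    eVariationOn γ (Icc 0 t) ≤ ENNReal.ofReal (D * infDist (γ t) (frontier Ω))

/-- The `D₀`-John condition: there is `X₀ ∈ Ω` such that every `Y ∈ Ω` can be joined to `X₀` by a
`D₀`-non-tangential path in `Ω` from `Y` to `X₀`. -/
def JohnWith (Ω : Set (Euc m)) (D₀ : ℝ) : Prop :=
  ∃ X₀ ∈ Ω, ∀ Y ∈ Ω, ∃ γ : ℝ → Euc m, IsNTPath Ω D₀ γ ∧ γ 0 = Y ∧ γ 1 = X₀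

/-- The local `(D₀, R₀)`-John condition: for every `x ∈ ∂Ω` and `0 < r < R₀` there is a local John
point `Y ∈ B(x,r) ∩ Ω` with `B(Y, r/D₀) ⊆ Ω` such that every `z ∈ B(x,r) ∩ ∂Ω` can be joined to
`Y` by a `D₀`-non-tangential path in `Ω` of length at most `D₀ r`. -/
def LocalJohnWithin (Ω : Set (Euc m)) (D₀ R₀ : ℝ) : Prop :=
  ∀ x ∈ frontier Ω, ∀ r : ℝ, 0 < r → r < R₀ →
    ∃ Y ∈ ball x r ∩ Ω, ball Y (r / D₀) ⊆ Ω ∧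
      ∀ z ∈ ball x r ∩ frontier Ω, ∃ γ : ℝ → Euc m,
        IsNTPath Ω D₀ γ ∧ γ 0 = z ∧ γ 1 = Y ∧ pathLen γ ≤ ENNReal.ofReal (D₀ * r)

/-- The local `D₀`-John condition (i.e. the local `(D₀, diam ∂Ω)`-John condition). -/
def LocalJohnWith (Ω : Set (Euc m)) (D₀ : ℝ) : Prop :=
  ∀ x ∈ frontier Ω, ∀ r : ℝ, 0 < r → ENNReal.ofReal r < EMetric.diam (frontier Ω) →
    ∃ Y ∈ ball x r ∩ Ω, ball Y (r / D₀) ⊆ Ω ∧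
      ∀ z ∈ ball x r ∩ frontier Ω, ∃ γ : ℝ → Euc m,
        IsNTPath Ω D₀ γ ∧ γ 0 = z ∧ γ 1 = Y ∧ pathLen γ ≤ ENNReal.ofReal (D₀ * r)

/-- The weak local `D₀`-John condition, with surface measure `ℋᵈ` on `∂Ω`. -/
def WeakLocalJohnWith (d : ℝ) (Ω : Set (Euc m)) (D₀ : ℝ) : Prop :=
  ∃ θ : ℝ, 0 < θ ∧ θ ≤ 1 ∧ ∃ R : ℝ, 2 ≤ R ∧ ∀ X ∈ Ω,
    ∃ F : Set (Euc m), MeasurableSet F ∧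
      F ⊆ ball X (R * infDist X (frontier Ω)) ∩ frontier Ω ∧
      ENNReal.ofReal θ * μH[d] (ball X (R * infDist X (frontier Ω)) ∩ frontier Ω) ≤ μH[d] F ∧
      ∀ z ∈ F, ∃ γ : ℝ → Euc m, IsNTPath Ω D₀ γ ∧ γ 0 = z ∧ γ 1 = X ∧
        pathLen γ ≤ ENNReal.ofReal (D₀ * (R * infDist X (frontier Ω)))

/-- The Harnack chain condition: there are `C ≥ 1` and `M : ℝ → ℕ` such that any `X, X' ∈ Ω` with
`δ(X), δ(X') ≥ ρ` and `|X - X'| < Λ ρ` can be joined by a chain of at most `M Λ` open balls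
contained in `Ω`, consecutive balls intersecting, with `C⁻¹ diam Bₖ ≤ dist(Bₖ, ∂Ω) ≤ C diam Bₖ`. -/
def HarnackChain (Ω : Set (Euc m)) : Prop :=
  ∃ C : ℝ, 1 ≤ C ∧ ∃ M : ℝ → ℕ,
    ∀ ρ : ℝ, 0 < ρ → ∀ Λ : ℝ, 1 ≤ Λ → ∀ X ∈ Ω, ∀ X' ∈ Ω,
      ρ ≤ infDist X (frontier Ω) → ρ ≤ infDist X' (frontier Ω) → dist X X' < Λ * ρ →
      ∃ N : ℕ, 1 ≤ N ∧ N ≤ M Λ ∧ ∃ ctr : ℕ → Euc m, ∃ rad : ℕ → ℝ,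
        X ∈ ball (ctr 0) (rad 0) ∧ X' ∈ ball (ctr (N - 1)) (rad (N - 1)) ∧
        (∀ k < N, ball (ctr k) (rad k) ⊆ Ω) ∧
        (∀ k, k + 1 < N → (ball (ctr k) (rad k) ∩ ball (ctr (k + 1)) (rad (k + 1))).Nonempty) ∧
        (∀ k < N,
          C⁻¹ * Metric.diam (ball (ctr k) (rad k))
              ≤ distSet (ball (ctr k) (rad k)) (frontier Ω) ∧
            distSet (ball (ctr k) (rad k)) (frontier Ω)
              ≤ C * Metric.diam (ball (ctr k) (rad k)))

/-- A domain (connected open set) is NTA if it satisfies the Harnack chain condition and the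
2-sided corkscrew condition. -/
def IsNTA (Θ : Set (Euc m)) : Prop :=
  IsOpen Θ ∧ IsConnected Θ ∧ HarnackChain Θ ∧ TwoSidedCorkscrew Θ

/-- `Ω` is a chord-arc domain: NTA with `d`-ADR boundary. -/
def IsCAD (d : ℝ) (Ω : Set (Euc m)) : Prop := IsNTA Ω ∧ IsADR d (frontier Ω)

/-- `Ω` is a 2-sided chord-arc domain: a chord-arc domain such that `int (Ωᶜ)` is NTA. -/
def IsTwoSidedCAD (d : ℝ) (Ω : Set (Euc m)) : Prop := IsCAD d Ω ∧ IsNTA (interior Ωᶜ)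

/-- `E`, with the Euclidean metric, is quasiconvex: any two points of `E` can be joined by a path
in `E` of length at most `C` times their distance. -/
def QuasiconvexSet (E : Set (Euc m)) : Prop :=
  ∃ C : ℝ, 1 ≤ C ∧ ∀ x ∈ E, ∀ y ∈ E, ∃ γ : ℝ → Euc m,
    ContinuousOn γ (Icc 0 1) ∧ (∀ t ∈ Icc (0:ℝ) 1, γ t ∈ E) ∧ γ 0 = x ∧ γ 1 = y ∧
      eVariationOn γ (Icc 0 1) ≤ ENNReal.ofReal (C * dist x y)

/-- `E`, with the Euclidean metric, is annularly quasiconvex. -/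
def AnnularlyQuasiconvexSet (E : Set (Euc m)) : Prop :=
  ∃ C : ℝ, 1 ≤ C ∧ ∀ z ∈ E, ∀ r : ℝ, 0 < r →
    ENNReal.ofReal (C * r) < EMetric.diam E →
    ∀ x ∈ E ∩ (ball z (2 * r) \ ball z r), ∀ y ∈ E ∩ (ball z (2 * r) \ ball z r),
      ∃ γ : ℝ → Euc m, ContinuousOn γ (Icc 0 1) ∧
        (∀ t ∈ Icc (0:ℝ) 1, γ t ∈ E ∩ (ball z (C * r) \ ball z (r / C))) ∧
        γ 0 = x ∧ γ 1 = y ∧ eVariationOn γ (Icc 0 1) ≤ ENNReal.ofReal (C * dist x y)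

/-- `ρ` is an upper gradient of `f` on `E`: for every `1`-Lipschitz curve `γ : [0,L] → E` we have
`|f(γ 0) - f(γ L)| ≤ ∫₀ᴸ ρ(γ t) dt`. -/
def IsUpperGradientOn (f : Euc m → ℝ) (ρ : Euc m → ℝ≥0∞) (E : Set (Euc m)) : Prop :=
  ∀ L : ℝ, 0 ≤ L → ∀ γ : ℝ → Euc m, LipschitzOnWith 1 γ (Icc 0 L) →
    (∀ t ∈ Icc (0:ℝ) L, γ t ∈ E) →
    ENNReal.ofReal |f (γ 0) - f (γ L)| ≤ ∫⁻ t in Icc (0:ℝ) L, ρ (γ t)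

/-- `ϱ` is admissible for the pair `(E,F)` in `S`: `∫_γ ϱ ds ≥ 1` for every rectifiable
(`1`-Lipschitz parametrized) path in `S` connecting `E` and `F`. -/
def AdmissibleFor (S E F : Set (Euc m)) (ϱ : Euc m → ℝ≥0∞) : Prop :=
  ∀ L : ℝ, 0 < L → ∀ γ : ℝ → Euc m, LipschitzOnWith 1 γ (Icc 0 L) →
    (∀ t ∈ Icc (0:ℝ) L, γ t ∈ S) → γ 0 ∈ E → γ L ∈ F →
    1 ≤ ∫⁻ t in Icc (0:ℝ) L, ϱ (γ t)

/-- The `d`-modulus of the family of paths in `S` connecting `E` and `F`, w.r.t. measure `σ`. -/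
def modOn (σ : Measure (Euc m)) (S E F : Set (Euc m)) (d : ℝ) : ℝ≥0∞ :=
  sInf {v : ℝ≥0∞ | ∃ ϱ : Euc m → ℝ≥0∞, Measurable ϱ ∧ AdmissibleFor S E F ϱ ∧
    v = ∫⁻ x, ϱ x ^ d ∂σ}

/-- `L` is an affine hyperplane (affine subspace of codimension 1) of `ℝ^m`. -/
def IsAffineHyperplane (L : Set (Euc m)) : Prop :=
  ∃ A : AffineSubspace ℝ (Euc m), (A : Set (Euc m)) = L ∧
    Module.finrank ℝ A.direction + 1 = m

/-- The bilateral β-number `bβ_{∂Ω}(B(x,r), L)`. -/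
def bBeta (Ω : Set (Euc m)) (x : Euc m) (r : ℝ) (L : Set (Euc m)) : ℝ :=
  sSup ((fun y => infDist y L / r) '' (ball x r ∩ frontier Ω)) +
    sSup ((fun Y => infDist Y (frontier Ω) / r) '' (L ∩ ball x r))

/-- The open `c`-neighborhood `U_c(L)` of `L`. -/
def tubeNbhd (L : Set (Euc m)) (c : ℝ) : Set (Euc m) := {Y | infDist Y L < c}

/-- The slit `{(x,0) : 0 ≤ x ≤ 1} ⊆ ℝ²`. -/
def slitSeg : Set (Euc 2) := {p : Euc 2 | p 1 = 0 ∧ 0 ≤ p 0 ∧ p 0 ≤ 1}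

/-- The slit disc `Ω₁ := B(0,1) ∖ {(x,0) : 0 ≤ x ≤ 1}`. -/
def slitDisc : Set (Euc 2) := ball (0 : Euc 2) 1 \ slitSeg

/-!
From a point of the lower half of the slit disc the segment to `X₀ = (0, -1/2)` is a John path;
from a point of the upper half one first goes straight to `(0, 1/2)` and then along the left
half of the circle of radius `1/2` to `X₀`. Along both paths the distance to the boundary grows
at least linearly in the time parameter, while the speed is bounded.

The local John condition fails at the tip `(1, 0)` of the slit. A local John point `Y` in a
small ball around the tip lies off the axis, and the ball contains a point `z` of the unit circle
on the other side of the axis. A path in the slit disc from `z` to `Y` must cross the axis to the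
left of the origin, so it has length more than `1/2`, which exceeds `D₀ r` for small `r`.
-/

open Real

theorem LipschitzOnWith.congr {α β : Type*} [PseudoEMetricSpace α] [PseudoEMetricSpace β]
    {f g : α → β} {K : ℝ≥0} {s : Set α} (h : LipschitzOnWith K f s) (hfg : EqOn g f s) :
    LipschitzOnWith K g s := fun x hx y hy => by
  rw [hfg hx, hfg hy]
  exact h hx hy

theorem LipschitzOnWith.Icc_union {α : Type*} [PseudoMetricSpace α] {f : ℝ → α} {K : ℝ≥0}
    {a b c : ℝ} (hab : a ≤ b) (hbc : b ≤ c)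
    (h₁ : LipschitzOnWith K f (Icc a b)) (h₂ : LipschitzOnWith K f (Icc b c)) :
    LipschitzOnWith K f (Icc a c) := by
  rw [lipschitzOnWith_iff_dist_le_mul] at h₁ h₂ ⊢
  have key : ∀ x ∈ Icc a c, ∀ y ∈ Icc a c, x ≤ y → dist (f x) (f y) ≤ K * dist x y := by
    intro x hx y hy hxy
    rcases le_or_gt y b with hyb | hby
    · exact h₁ x ⟨hx.1, hxy.trans hyb⟩ y ⟨hy.1, hyb⟩
    rcases le_or_gt b x with hbx | hxb
    · exact h₂ x ⟨hbx, hx.2⟩ y ⟨hbx.trans hxy, hy.2⟩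
    calc dist (f x) (f y) ≤ dist (f x) (f b) + dist (f b) (f y) := dist_triangle _ _ _
      _ ≤ K * dist x b + K * dist b y :=
          add_le_add (h₁ x ⟨hx.1, hxb.le⟩ b ⟨hab, le_rfl⟩) (h₂ b ⟨le_rfl, hbc⟩ y ⟨hby.le, hy.2⟩)
      _ = K * dist x y := by
          simp only [Real.dist_eq, abs_of_nonpos (sub_nonpos.2 hxb.le),
            abs_of_nonpos (sub_nonpos.2 hby.le), abs_of_nonpos (sub_nonpos.2 hxy)]
          ring
  intro x hx y hy
  rcases le_total x y with hxy | hyx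
  · exact key x hx y hy hxy
  · rw [dist_comm, dist_comm x]
    exact key y hy x hx hyx

theorem LipschitzOnWith.eVariationOn_Icc_le {α : Type*} [PseudoEMetricSpace α] {f : ℝ → α}
    {K : ℝ≥0} {a b : ℝ} (hf : LipschitzOnWith K f (Icc a b)) :
    eVariationOn f (Icc a b) ≤ K * ENNReal.ofReal (b - a) := by
  simpa [eVariationOn_id_Icc] using hf.comp_eVariationOn_le (g := id) (mapsTo_id _)

theorem le_infDist_frontier_of_ball_subset {α : Type*} [PseudoMetricSpace α] {Ω : Set α}
    (hΩ : IsOpen Ω) (hfr : (frontier Ω).Nonempty) {Z : α} {ρ : ℝ} (h : ball Z ρ ⊆ Ω) :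
    ρ ≤ infDist Z (frontier Ω) :=
  (le_infDist hfr).2 fun _ hy => not_lt.1 fun hlt =>
    hΩ.inter_frontier_eq.subset ⟨h (mem_ball'.2 hlt), hy⟩

theorem isNTPath_of_lipschitzOnWith {Ω : Set (Euc m)} (hΩ : IsOpen Ω)
    (hfr : (frontier Ω).Nonempty) {γ : ℝ → Euc m} {K : ℝ≥0} {c D : ℝ} (hc : 0 < c)
    (hKD : K ≤ D * c) (hγ : LipschitzOnWith K γ (Icc 0 1)) (h₀ : γ 0 ∈ Ω)
    (hball : ∀ t ∈ Ioc (0:ℝ) 1, ball (γ t) (c * t) ⊆ Ω) : IsNTPath Ω D γ := by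
  have hmem : ∀ t ∈ Ioc (0:ℝ) 1, γ t ∈ Ω := fun t ht =>
    hball t ht (mem_ball_self (mul_pos hc ht.1))
  have hD : 0 ≤ D := nonneg_of_mul_nonneg_left (K.coe_nonneg.trans hKD) hc
  refine ⟨⟨hγ.continuousOn, fun t ht => subset_closure ?_, hmem⟩, fun t ht => ?_⟩
  · rcases ht.1.eq_or_lt with rfl | ht₀
    · exact h₀
    · exact hmem t ⟨ht₀, ht.2⟩
  have hδ : c * t ≤ infDist (γ t) (frontier Ω) := by
    rcases ht.1.eq_or_lt with rfl | ht₀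
    · simpa using infDist_nonneg
    · exact le_infDist_frontier_of_ball_subset hΩ hfr (hball t ⟨ht₀, ht.2⟩)
  calc eVariationOn γ (Icc 0 t)
      ≤ K * ENNReal.ofReal (t - 0) := (hγ.mono (Icc_subset_Icc_right ht.2)).eVariationOn_Icc_le
    _ = ENNReal.ofReal (K * t) := by
        rw [sub_zero, ← ENNReal.ofReal_coe_nnreal, ← ENNReal.ofReal_mul K.coe_nonneg]
    _ ≤ ENNReal.ofReal (D * infDist (γ t) (frontier Ω)) :=
        ENNReal.ofReal_le_ofReal (by nlinarith [ht.1])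

theorem abs_sub_apply_le_dist (p q : Euc m) (i : Fin m) : |p i - q i| ≤ dist p q := by
  simpa [dist_eq_norm] using PiLp.norm_apply_le (p - q) i

theorem abs_apply_le_norm (p : Euc m) (i : Fin m) : |p i| ≤ ‖p‖ := by
  simpa using PiLp.norm_apply_le p i

theorem norm_sq_euc_two (p : Euc 2) : ‖p‖ ^ 2 = p 0 ^ 2 + p 1 ^ 2 := by
  simp [EuclideanSpace.norm_sq_eq, Fin.sum_univ_two]

theorem dist_sq_euc_two (p q : Euc 2) : dist p q ^ 2 = (p 0 - q 0) ^ 2 + (p 1 - q 1) ^ 2 := by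
  simp [dist_eq_norm, norm_sq_euc_two]

theorem norm_toLp_zero_cons (c : ℝ) : ‖(!₂[0, c] : Euc 2)‖ = |c| := by
  simp [EuclideanSpace.norm_eq, sqrt_sq_eq_abs]

theorem mem_slitDisc_iff {p : Euc 2} :
    p ∈ slitDisc ↔ ‖p‖ < 1 ∧ ¬(p 1 = 0 ∧ 0 ≤ p 0 ∧ p 0 ≤ 1) := by
  rw [slitDisc, mem_sdiff, mem_ball_zero_iff]
  rfl

theorem mem_slitDisc_of_apply_one_ne_zero {p : Euc 2} (hp : ‖p‖ < 1) (hp₁ : p 1 ≠ 0) :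
    p ∈ slitDisc :=
  mem_slitDisc_iff.2 ⟨hp, fun h => hp₁ h.1⟩

theorem apply_one_ne_zero_of_mem_slitDisc {p : Euc 2} (hp : p ∈ slitDisc) (hp₀ : 0 ≤ p 0) :
    p 1 ≠ 0 := fun hp₁ =>
  (mem_slitDisc_iff.1 hp).2
    ⟨hp₁, hp₀, (le_abs_self _).trans ((abs_apply_le_norm p 0).trans (mem_slitDisc_iff.1 hp).1.le)⟩

theorem isOpen_slitDisc : IsOpen slitDisc := by
  refine isOpen_ball.sdiff ?_
  have h₀ : Continuous fun p : Euc 2 => p 0 := (EuclideanSpace.proj (0 : Fin 2)).continuous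
  have h₁ : Continuous fun p : Euc 2 => p 1 := (EuclideanSpace.proj (1 : Fin 2)).continuous
  exact (isClosed_eq h₁ continuous_const).inter
    ((isClosed_le continuous_const h₀).inter (isClosed_le h₀ continuous_const))

theorem dense_apply_one_ne_zero : Dense {p : Euc 2 | p 1 ≠ 0} := by
  have hsurj : Function.Surjective (EuclideanSpace.proj (𝕜 := ℝ) (1 : Fin 2)) :=
    fun a => ⟨a • EuclideanSpace.single 1 1, by simp⟩
  exact (dense_compl_singleton (0 : ℝ)).preimage
    ((EuclideanSpace.proj (𝕜 := ℝ) (1 : Fin 2)).isOpenMap hsurj)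

theorem closure_slitDisc : closure slitDisc = closedBall 0 1 := by
  refine (closure_mono sdiff_subset).trans closure_ball_subset_closedBall |>.antisymm ?_
  rw [← closure_ball (0 : Euc 2) one_ne_zero]
  refine closure_minimal ((dense_apply_one_ne_zero.open_subset_closure_inter isOpen_ball).trans
    (closure_mono fun p hp => mem_slitDisc_of_apply_one_ne_zero ?_ hp.2)) isClosed_closure
  exact mem_ball_zero_iff.1 hp.1

theorem mem_frontier_slitDisc {p : Euc 2} (hp : ‖p‖ ≤ 1) (hp' : p ∉ slitDisc) :
    p ∈ frontier slitDisc := by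
  rw [frontier, closure_slitDisc, isOpen_slitDisc.interior_eq]
  exact ⟨mem_closedBall_zero_iff.2 hp, hp'⟩

theorem mem_frontier_slitDisc_of_mem_slitSeg {p : Euc 2} (hp : p ∈ slitSeg) :
    p ∈ frontier slitDisc := by
  obtain ⟨hp₁, hp₀, hp₀'⟩ := hp
  refine mem_frontier_slitDisc ?_ fun h => (mem_slitDisc_iff.1 h).2 ⟨hp₁, hp₀, hp₀'⟩
  refine (sq_le_one_iff₀ (norm_nonneg p)).1 ?_
  rw [norm_sq_euc_two, hp₁]
  nlinarith

theorem frontier_slitDisc_nonempty : (frontier slitDisc).Nonempty :=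
  ⟨0, mem_frontier_slitDisc_of_mem_slitSeg (by simp [slitSeg])⟩

theorem ball_lineMap_subset_slitDisc {Y C : Euc 2} (hY : ‖Y‖ ≤ 1) (hC : ‖C‖ ≤ 1 / 2)
    (hC₁ : 1 / 2 ≤ |C 1|) (hYC : 0 ≤ Y 1 * C 1) {t : ℝ} (ht : t ∈ Ioc (0:ℝ) 1) :
    ball (AffineMap.lineMap Y C t) (t / 4) ⊆ slitDisc := by
  intro w hw
  set Z := AffineMap.lineMap Y C t with hZ
  rw [AffineMap.lineMap_apply_module] at hZ
  have hZnorm : ‖Z‖ ≤ 1 - t / 2 := by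
    calc ‖Z‖ ≤ ‖(1 - t) • Y‖ + ‖t • C‖ := hZ ▸ norm_add_le _ _
      _ = (1 - t) * ‖Y‖ + t * ‖C‖ := by
          rw [norm_smul, norm_smul, Real.norm_of_nonneg (sub_nonneg.2 ht.2),
            Real.norm_of_nonneg ht.1.le]
      _ ≤ 1 - t / 2 := by nlinarith [ht.1, ht.2]
  -- `Y` and `C` lie on the same side of the axis, so `Z` stays at height at least `t / 2`.
  have hZ₁ : (t / 2) ^ 2 ≤ Z 1 ^ 2 := by
    have : Z 1 = (1 - t) * Y 1 + t * C 1 := by simp [hZ]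
    rw [this]
    have hC₁sq : 1 / 4 ≤ C 1 ^ 2 := by nlinarith [sq_abs (C 1)]
    nlinarith [mul_nonneg (mul_nonneg (sub_nonneg.2 ht.2) ht.1.le) hYC,
      mul_le_mul_of_nonneg_left hC₁sq (sq_nonneg t), sq_nonneg ((1 - t) * Y 1)]
  have hwZ := mem_ball.1 hw
  refine mem_slitDisc_of_apply_one_ne_zero ?_ fun hw₁ => ?_
  · linarith [norm_sub_norm_le w Z, dist_eq_norm w Z, ht.1]
  · have := abs_sub_apply_le_dist w Z 1
    rw [hw₁, zero_sub, abs_neg] at this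
    nlinarith [sq_abs (Z 1), abs_nonneg (Z 1), ht.1]

def leftSemicircle (s : ℝ) : Euc 2 := !₂[-sin (π * s) / 2, cos (π * s) / 2]

theorem lipschitzWith_leftSemicircle : LipschitzWith 2 leftSemicircle := by
  refine LipschitzWith.of_dist_le_mul fun s s' => ?_
  have hchord := one_sub_sq_div_two_le_cos (x := π * s - π * s')
  rw [cos_sub] at hchord
  have hπ : π ^ 2 < 16 := by nlinarith [pi_pos, pi_lt_four]
  refine le_of_sq_le_sq ?_ (by positivity)
  rw [dist_sq_euc_two, Real.dist_eq, mul_pow, sq_abs]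
  simp only [leftSemicircle]
  simp
  nlinarith [sin_sq_add_cos_sq (π * s), sin_sq_add_cos_sq (π * s'), sq_nonneg (s - s')]

theorem ball_leftSemicircle_subset_slitDisc {s : ℝ} (hs : s ∈ Icc (0:ℝ) 1) :
    ball (leftSemicircle s) (1 / 2) ⊆ slitDisc := by
  intro w hw
  have hw' := mem_ball.1 hw
  have hsin : 0 ≤ sin (π * s) :=
    sin_nonneg_of_nonneg_of_le_pi (by nlinarith [pi_pos, hs.1]) (by nlinarith [pi_pos, hs.2])
  have hsc := sin_sq_add_cos_sq (π * s)
  have hnorm : ‖leftSemicircle s‖ = 1 / 2 := by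
    refine (sq_eq_sq₀ (norm_nonneg _) (by norm_num)).1 ?_
    simp [norm_sq_euc_two, leftSemicircle]
    nlinarith
  refine mem_slitDisc_iff.2 ⟨?_, fun ⟨hw₁, hw₀, _⟩ => ?_⟩
  · linarith [norm_sub_norm_le w (leftSemicircle s), dist_eq_norm w (leftSemicircle s)]
  · have hd : dist w (leftSemicircle s) ^ 2
        = (w 0 + sin (π * s) / 2) ^ 2 + (cos (π * s) / 2) ^ 2 := by
      rw [dist_sq_euc_two, hw₁]
      simp [leftSemicircle]
      ring
    nlinarith [dist_nonneg (x := w) (y := leftSemicircle s), mul_nonneg hw₀ hsin]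

def leftDetour (Y : Euc 2) (t : ℝ) : Euc 2 :=
  if t ≤ 1 / 2 then AffineMap.lineMap Y !₂[0, 1 / 2] (2 * t) else leftSemicircle (2 * t - 1)

theorem leftDetour_eqOn_lineMap (Y : Euc 2) :
    EqOn (leftDetour Y) (fun t => AffineMap.lineMap Y !₂[0, 1 / 2] (2 * t)) (Icc 0 (1 / 2)) :=
  fun t ht => by simp only [leftDetour, if_pos ht.2]

theorem leftDetour_eqOn_leftSemicircle (Y : Euc 2) :
    EqOn (leftDetour Y) (fun t => leftSemicircle (2 * t - 1)) (Icc (1 / 2) 1) := fun t ht => by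
  rcases ht.1.eq_or_lt with rfl | ht'
  · simp only [leftDetour, if_pos le_rfl]
    norm_num [leftSemicircle]
  · simp only [leftDetour, if_neg (not_le.2 ht')]

theorem lipschitzOnWith_leftDetour {Y : Euc 2} (hY : ‖Y‖ ≤ 1) :
    LipschitzOnWith 4 (leftDetour Y) (Icc 0 1) := by
  have hYC : nndist Y !₂[0, 1 / 2] ≤ 2 := by
    rw [← NNReal.coe_le_coe, coe_nndist, dist_eq_norm, NNReal.coe_ofNat]
    have hC : ‖(!₂[0, 1 / 2] : Euc 2)‖ = 1 / 2 := by norm_num [norm_toLp_zero_cons]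
    linarith [norm_sub_le Y !₂[0, 1 / 2]]
  have hdouble (a : ℝ) : LipschitzWith 2 fun t : ℝ => 2 * t - a :=
    LipschitzWith.of_dist_le_mul fun s t => by
      rw [Real.dist_eq, Real.dist_eq, show 2 * s - a - (2 * t - a) = 2 * (s - t) by ring,
        abs_mul, abs_two, NNReal.coe_ofNat]
  refine LipschitzOnWith.Icc_union (b := 1 / 2) (by norm_num) (by norm_num) ?_ ?_
  · refine LipschitzOnWith.congr ?_ (leftDetour_eqOn_lineMap Y)
    have := (((lipschitzWith_lineMap Y _).weaken hYC).comp (hdouble 0)).lipschitzOnWith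
      (s := Icc (0:ℝ) (1 / 2))
    norm_num [Function.comp_def] at this ⊢
    exact this
  · refine LipschitzOnWith.congr ?_ (leftDetour_eqOn_leftSemicircle Y)
    have := (lipschitzWith_leftSemicircle.comp (hdouble 1)).lipschitzOnWith
      (s := Icc (1 / 2 : ℝ) 1)
    norm_num [Function.comp_def] at this ⊢
    exact this

theorem isNTPath_lineMap_slitDisc {Y : Euc 2} (hY : Y ∈ slitDisc) (hY₁ : Y 1 ≤ 0) :
    IsNTPath slitDisc 8 (AffineMap.lineMap Y !₂[0, -(1 / 2)]) := by
  have hX₀ : ‖(!₂[0, -(1 / 2)] : Euc 2)‖ = 1 / 2 := by norm_num [norm_toLp_zero_cons]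
  have hYX₀ : nndist Y !₂[0, -(1 / 2)] ≤ 2 := by
    rw [← NNReal.coe_le_coe, coe_nndist, dist_eq_norm, NNReal.coe_ofNat]
    linarith [norm_sub_le Y !₂[0, -(1 / 2)], (mem_slitDisc_iff.1 hY).1]
  refine isNTPath_of_lipschitzOnWith isOpen_slitDisc frontier_slitDisc_nonempty
    (c := 1 / 4) (K := 2) (by norm_num) (by norm_num)
    ((lipschitzWith_lineMap Y _).weaken hYX₀).lipschitzOnWith
    (by rwa [AffineMap.lineMap_apply_zero]) fun t ht => ?_
  rw [mul_comm, ← div_eq_mul_one_div]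
  exact ball_lineMap_subset_slitDisc (mem_slitDisc_iff.1 hY).1.le hX₀.le
    (by simp) (by simp; linarith) ht

theorem isNTPath_leftDetour_slitDisc {Y : Euc 2} (hY : Y ∈ slitDisc) (hY₁ : 0 < Y 1) :
    IsNTPath slitDisc 8 (leftDetour Y) := by
  have hYnorm := (mem_slitDisc_iff.1 hY).1.le
  refine isNTPath_of_lipschitzOnWith isOpen_slitDisc frontier_slitDisc_nonempty
    (c := 1 / 2) (by norm_num) (by norm_num) (lipschitzOnWith_leftDetour hYnorm)
    (by simpa [leftDetour]) fun t ht => ?_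
  rcases le_or_gt t (1 / 2) with ht₂ | ht₂
  · rw [show 1 / 2 * t = 2 * t / 4 by ring, leftDetour_eqOn_lineMap Y ⟨ht.1.le, ht₂⟩]
    exact ball_lineMap_subset_slitDisc hYnorm (by simp [norm_toLp_zero_cons])
      (by simp) (by simp; linarith) ⟨by linarith [ht.1], by linarith⟩
  · rw [leftDetour_eqOn_leftSemicircle Y ⟨ht₂.le, ht.2⟩]
    exact (ball_subset_ball (by linarith [ht.2])).trans
      (ball_leftSemicircle_subset_slitDisc ⟨by linarith, by linarith [ht.2]⟩)

theorem exists_isNTPath_slitDisc {Y : Euc 2} (hY : Y ∈ slitDisc) :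
    ∃ γ : ℝ → Euc 2, IsNTPath slitDisc 8 γ ∧ γ 0 = Y ∧ γ 1 = !₂[0, -(1 / 2)] := by
  rcases le_or_gt (Y 1) 0 with hY₁ | hY₁
  · exact ⟨_, isNTPath_lineMap_slitDisc hY hY₁, AffineMap.lineMap_apply_zero _ _,
      AffineMap.lineMap_apply_one _ _⟩
  · refine ⟨_, isNTPath_leftDetour_slitDisc hY hY₁, by simp [leftDetour], ?_⟩
    simp only [leftDetour, if_neg (show ¬(1 : ℝ) ≤ 1 / 2 by norm_num)]
    norm_num [leftSemicircle]

theorem ofReal_apply_zero_lt_pathLen {γ : ℝ → Euc 2} (hγ : IsPathIn slitDisc γ)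
    (hsign : γ 0 1 * γ 1 1 < 0) : ENNReal.ofReal (γ 0 0) < pathLen γ := by
  have hcont : ContinuousOn (fun t => γ t 1) (uIcc 0 1) := by
    rw [uIcc_of_le zero_le_one]
    exact (EuclideanSpace.proj (𝕜 := ℝ) (1 : Fin 2)).continuous.comp_continuousOn hγ.1
  have hzero : (0 : ℝ) ∈ uIcc (γ 0 1) (γ 1 1) := by
    rcases mul_neg_iff.1 hsign with ⟨h₀, h₁⟩ | ⟨h₀, h₁⟩
    · exact mem_uIcc.2 (Or.inr ⟨h₁.le, h₀.le⟩)
    · exact mem_uIcc.2 (Or.inl ⟨h₀.le, h₁.le⟩)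
  obtain ⟨t, ht, hγt⟩ := intermediate_value_uIcc hcont hzero
  rw [uIcc_of_le zero_le_one] at ht
  simp only at hγt
  have hγ₀ : γ 0 1 ≠ 0 := left_ne_zero_of_mul hsign.ne
  have ht₀ : 0 < t := ht.1.lt_of_ne fun h => hγ₀ (h ▸ hγt)
  obtain ⟨hnorm, hslit⟩ := mem_slitDisc_iff.1 (hγ.2.2 t ⟨ht₀, ht.2⟩)
  have hneg : γ t 0 < 0 := by
    by_contra! h
    exact hslit ⟨hγt, h, (le_abs_self _).trans ((abs_apply_le_norm _ 0).trans hnorm.le)⟩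
  calc ENNReal.ofReal (γ 0 0) < ENNReal.ofReal (dist (γ 0) (γ t)) := by
        refine ENNReal.ofReal_lt_ofReal_iff'.2 ⟨?_, ?_⟩
        · linarith [le_abs_self (γ 0 0 - γ t 0), abs_sub_apply_le_dist (γ 0) (γ t) 0]
        · have := abs_sub_apply_le_dist (γ 0) (γ t) 1
          rw [hγt, sub_zero] at this
          exact (abs_pos.2 hγ₀).trans_le this
    _ = edist (γ 0) (γ t) := (edist_dist _ _).symm
    _ ≤ pathLen γ := eVariationOn.edist_le γ ⟨le_rfl, zero_le_one⟩ ht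

theorem exists_mem_frontier_slitDisc_near_tip {r : ℝ} (hr : 0 < r) (hr₁ : r ≤ 1) {b : ℝ}
    (hb : b ≠ 0) : ∃ z ∈ ball !₂[1, 0] r ∩ frontier slitDisc, 1 / 2 ≤ z 0 ∧ z 1 * b < 0 := by
  set α := r / 2 with hα
  have hsin : 0 < sin α := sin_pos_of_pos_of_lt_pi (by positivity) (by linarith [pi_gt_three])
  have hcos : 1 - α ^ 2 / 2 ≤ cos α := one_sub_sq_div_two_le_cos
  have hsc := sin_sq_add_cos_sq α
  have hz : ∀ ε : ℝ, ε ^ 2 = 1 →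
      !₂[cos α, ε * sin α] ∈ ball !₂[1, 0] r ∩ frontier slitDisc ∧ 1 / 2 ≤ cos α := by
    intro ε hε
    have hnorm : ‖(!₂[cos α, ε * sin α] : Euc 2)‖ = 1 := by
      refine (sq_eq_sq₀ (norm_nonneg _) zero_le_one).1 ?_
      simp [norm_sq_euc_two, mul_pow, hε]
    refine ⟨⟨mem_ball.2 ?_, mem_frontier_slitDisc hnorm.le fun h => ?_⟩, by nlinarith⟩
    · refine lt_of_pow_lt_pow_left₀ 2 hr.le ?_
      simp [dist_sq_euc_two, mul_pow, hε]
      nlinarith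
    · exact (mem_slitDisc_iff.1 h).1.ne hnorm
  rcases hb.lt_or_gt with hb | hb
  · obtain ⟨hmem, hcos'⟩ := hz 1 (one_pow 2)
    exact ⟨_, hmem, by simpa using hcos', by simpa using mul_neg_of_pos_of_neg hsin hb⟩
  · obtain ⟨hmem, hcos'⟩ := hz (-1) (by norm_num)
    exact ⟨_, hmem, by simpa using hcos', by simpa using mul_pos hsin hb⟩

theorem not_localJohnWith_slitDisc (D₀ : ℝ) : ¬ LocalJohnWith slitDisc D₀ := by
  intro h
  set M := max D₀ 1
  set r := 1 / (2 * M)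
  have hM : 1 ≤ M := le_max_right _ _
  have hr : 0 < r := by positivity
  have hr₁ : r ≤ 1 / 2 := by
    rw [div_le_div_iff₀ (by positivity) two_pos]
    linarith
  have hDr : D₀ * r ≤ 1 / 2 := by
    rw [mul_one_div, div_le_iff₀ (by positivity)]
    linarith [le_max_left D₀ 1]
  have htip : (!₂[1, 0] : Euc 2) ∈ frontier slitDisc :=
    mem_frontier_slitDisc_of_mem_slitSeg (by simp [slitSeg])
  have hdiam : ENNReal.ofReal r < ediam (frontier slitDisc) := by
    calc ENNReal.ofReal r < ENNReal.ofReal 1 := by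
          rw [ENNReal.ofReal_lt_ofReal_iff one_pos]
          linarith
      _ = edist (!₂[1, 0] : Euc 2) 0 := by simp [edist_dist, EuclideanSpace.norm_eq]
      _ ≤ ediam (frontier slitDisc) :=
          edist_le_ediam_of_mem htip (mem_frontier_slitDisc_of_mem_slitSeg (by simp [slitSeg]))
  obtain ⟨Y, ⟨hYx, hY⟩, -, hpaths⟩ := h _ htip r hr hdiam
  have hY₀ : 0 ≤ Y 0 := by
    have := abs_sub_apply_le_dist Y !₂[1, 0] 0
    simp only [Matrix.cons_val_zero] at this
    linarith [neg_abs_le (Y 0 - 1), mem_ball.1 hYx]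
  obtain ⟨z, hz, hz₀, hzY⟩ := exists_mem_frontier_slitDisc_near_tip hr (by linarith)
    (apply_one_ne_zero_of_mem_slitDisc hY hY₀)
  obtain ⟨γ, hγ, rfl, rfl, hlen⟩ := hpaths z hz
  exact lt_irrefl _ ((ofReal_apply_zero_lt_pathLen hγ.1 hzY).trans_le
    (hlen.trans (ENNReal.ofReal_le_ofReal (hDr.trans hz₀))))

/-- **Example 3.3 (1).** The slit disc satisfies the John condition (with John point
`X₀ = (0,-1/2)`) but not the local John condition for any `D₀ ≥ 1`. -/
theorem slitDisc_john_not_localJohn :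
    (∃ D₀ : ℝ, 1 ≤ D₀ ∧ ∃ X₀ ∈ slitDisc,
      X₀ = (-(1 / 2) : ℝ) • EuclideanSpace.single (1 : Fin 2) (1 : ℝ) ∧
      ∀ Y ∈ slitDisc, ∃ γ : ℝ → Euc 2, IsNTPath slitDisc D₀ γ ∧ γ 0 = Y ∧ γ 1 = X₀) ∧
    ∀ D₀ : ℝ, 1 ≤ D₀ → ¬ LocalJohnWith slitDisc D₀ := by
  refine ⟨⟨8, by norm_num, !₂[0, -(1 / 2)], ?_, ?_, fun Y hY => exists_isNTPath_slitDisc hY⟩,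
    fun D₀ _ => not_localJohnWith_slitDisc D₀⟩
  · exact mem_slitDisc_of_apply_one_ne_zero (by norm_num [norm_toLp_zero_cons]) (by norm_num)
  · ext i
    fin_cases i <;> simp
end
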